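/- There do not exist F, M ∈ Λ with F + M = C, F·M = 1, F·K ≤ −1, M·K ≤ −1, F² + F·K ≥ 0 and M² + M·K ≥ 0. (The last four conditions say that both summands have the numerical invariants of curves of positive degree and geometric genus at least 1 on the cubic surface.) -/

import Mathlib

/-!
Write `f = F²`. Both summands satisfy `u² ≥ -u·K ≥ 1`, and `F² + M² = C² - 2 F·M = 17`, so
`1 ≤ f ≤ 16`. On the other hand `F·C = F² + F·M = f + 1`, and since `C² > 0` the Hodge index
theorem gives `C² F² ≤ (F·C)²`, i.e. `19 f ≤ (f + 1)²`, which fails for every `1 ≤ f ≤ 16`.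
-/

namespace CubicSurfaceLattice

/-- The Minkowski bilinear form of signature `(1,6)` on `Λ = ℤ⁷`. -/
def B (u v : Fin 7 → ℤ) : ℤ := u 0 * v 0 - ∑ i : Fin 6, u i.succ * v i.succ

/-- The canonical class `K = -3e₀ + e₁ + ⋯ + e₆` of the cubic surface. -/
def K : Fin 7 → ℤ := fun i => if i = 0 then -3 else 1

/-- The curve class `C = 13e₀ - 5(e₁ + ⋯ + e₆)`. -/
def C : Fin 7 → ℤ := fun i => if i = 0 then 13 else -5

end CubicSurfaceLattice

section Aczel

variable {R ι : Type*} [CommRing R] [LinearOrder R] [IsStrictOrderedRing R] [Fintype ι]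

theorem aczel_inequality (a₀ b₀ : R) (a b : ι → R) (ha : ∑ i, a i ^ 2 < a₀ ^ 2) :
    (a₀ ^ 2 - ∑ i, a i ^ 2) * (b₀ ^ 2 - ∑ i, b i ^ 2) ≤ (a₀ * b₀ - ∑ i, a i * b i) ^ 2 := by
  set P := ∑ i, a i ^ 2
  set Q := ∑ i, b i ^ 2
  set c := ∑ i, a i * b i
  set X := a₀ ^ 2 - P
  set Y := b₀ ^ 2 - Q
  set D := a₀ * b₀ - c
  -- `X t² - 2 D t + Y = (a₀ t - b₀)² - ∑ (aᵢ t - bᵢ)²` is `≤ 0` at `t = b₀ / a₀`, and a quadratic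
  -- with positive leading coefficient taking a nonpositive value has discriminant `D² - X Y ≥ 0`.
  have hexpand : ∑ i, (a i * b₀ - b i * a₀) ^ 2 = b₀ ^ 2 * P - 2 * a₀ * b₀ * c + a₀ ^ 2 * Q := by
    simp only [P, Q, c, Finset.mul_sum, ← Finset.sum_sub_distrib, ← Finset.sum_add_distrib]
    exact Finset.sum_congr rfl fun i _ => by ring
  have hvalue : X * b₀ ^ 2 - 2 * D * a₀ * b₀ + Y * a₀ ^ 2 ≤ 0 := by
    have hsq : 0 ≤ ∑ i, (a i * b₀ - b i * a₀) ^ 2 := Finset.sum_nonneg fun i _ => sq_nonneg _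
    linear_combination hsq + hexpand
  have hX : 0 < X := sub_pos.mpr ha
  have ha₀ : 0 < a₀ ^ 2 := (Finset.sum_nonneg fun i _ => sq_nonneg (a i)).trans_lt ha
  have hdisc : a₀ ^ 2 * (D ^ 2 - X * Y) =
      (X * b₀ - D * a₀) ^ 2 - X * (X * b₀ ^ 2 - 2 * D * a₀ * b₀ + Y * a₀ ^ 2) := by
    ring
  have hdisc_nonneg : 0 ≤ a₀ ^ 2 * (D ^ 2 - X * Y) := by
    rw [hdisc, sub_nonneg]
    exact (mul_nonpos_of_nonneg_of_nonpos hX.le hvalue).trans (sq_nonneg _)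
  exact sub_nonneg.mp ((mul_nonneg_iff_of_pos_left ha₀).mp hdisc_nonneg)

end Aczel

namespace CubicSurfaceLattice

theorem B_comm (u v : Fin 7 → ℤ) : B u v = B v u := by
  simp only [B, mul_comm]

theorem B_add_right (u v w : Fin 7 → ℤ) : B u (v + w) = B u v + B u w := by
  simp only [B, Pi.add_apply, mul_add, Finset.sum_add_distrib]
  ring

theorem B_add_left (u v w : Fin 7 → ℤ) : B (u + v) w = B u w + B v w := by
  rw [B_comm, B_add_right, B_comm w, B_comm w]

theorem B_add_add (u v : Fin 7 → ℤ) : B (u + v) (u + v) = B u u + 2 * B u v + B v v := by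
  rw [B_add_left, B_add_right, B_add_right, B_comm v u]
  ring

/-- The Hodge index theorem on `Λ`. -/
theorem B_mul_le_sq (u v : Fin 7 → ℤ) (hu : 0 < B u u) : B u u * B v v ≤ B u v ^ 2 := by
  simp only [B, ← sq] at hu ⊢
  exact aczel_inequality _ _ _ _ (sub_pos.mp hu)

theorem B_C_C : B C C = 19 := by decide

/-- There is no decomposition C = F + M with F·M = 1 where both summands have the
numerical invariants of curves of positive degree and geometric genus at least 1. -/
theorem no_splitting_positive_genus :
    ¬ ∃ F M : Fin 7 → ℤ, F + M = C ∧ B F M = 1 ∧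
      B F K ≤ -1 ∧ B M K ≤ -1 ∧ 0 ≤ B F F + B F K ∧ 0 ≤ B M M + B M K := by
  rintro ⟨F, M, hFM, hFdotM, hFK, hMK, hFg, hMg⟩
  have hF : 1 ≤ B F F := by omega
  have hM : 1 ≤ B M M := by omega
  have hsum : B F F + 2 * B F M + B M M = 19 := by rw [← B_add_add, hFM, B_C_C]
  have hFC : B C F = B F F + B F M := by rw [B_comm, ← hFM, B_add_right]
  have hodge := B_mul_le_sq C F (by rw [B_C_C]; norm_num)
  rw [B_C_C, hFC, hFdotM] at hodge
  nlinarith [mul_nonneg (sub_nonneg.mpr hF) (sub_nonneg.mpr hM)]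

end CubicSurfaceLattice
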